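/- arXiv:1108.4436 — 2 statements merged into one kernel-verified Lean document; each statement's English description precedes it below -/
import Mathlib

section
/- In the reduction from Hitting Set, in any extension of the partial votes in which no candidate exceeds their maximum partial score with respect to c, if candidate x_i is ranked last in vote v_i, then for every j with 1 ≤ j ≤ n, candidate x_i^j must take the first position in vote w_i^j, and hence cannot take the first position in any vote of V_3^p. -/
/-- Candidates of the reduction from Hitting Set with `m` elements and `n` sets. -/
inductive Cand (m n : ℕ) where
  | c | h
  | x (i : Fin m)
  | xx (i : Fin m) (j : Fin n)
  | y (i : Fin m) (j : Fin n)
  | z (i : Fin m) (j : Fin n)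
  deriving DecidableEq, Fintype

/-- Index type for the partial votes `V^p = V_1^p ∪ V_2^p ∪ V_3^p`. -/
inductive Idx (m n k : ℕ) where
  | one (a : Fin k)              -- the k votes of V_1^p
  | v (i : Fin m)                -- votes v_i
  | vij (i : Fin m) (j : Fin n)  -- votes v_i^j
  | wij (i : Fin m) (j : Fin n)  -- votes w_i^j
  | t (j : Fin n)                -- votes of V_3^p
  deriving DecidableEq, Fintype

/-- Three-tier partial order `T ≻ middle ≻ B`, with the candidates in `E`
left unconstrained. -/
def tierE {C : Type*} [DecidableEq C] (T B E : Finset C) : C → C → Prop :=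
  fun a b => a ∉ E ∧ b ∉ E ∧ ((a ∈ T ∧ b ∉ T) ∨ (b ∈ B ∧ a ∉ B))

/-- The partial votes of the reduction from the Hitting Set instance
`(X = Fin m, S, k)`. -/
def pvote (m n k : ℕ) (hn : 0 < n) (S : Fin n → Finset (Fin m)) :
    Idx m n k → Cand m n → Cand m n → Prop
  | .one _ => tierE {Cand.h} (Finset.univ.image Cand.x) ∅
  | .v i => tierE {Cand.h} {Cand.x i, Cand.y i ⟨0, hn⟩} ∅
  | .vij i j => tierE {Cand.y i j} {Cand.h} {Cand.z i j}
  | .wij i j =>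
      if hj : j.val + 1 < n then
        tierE {Cand.xx i j} {Cand.y i ⟨j.val + 1, hj⟩} {Cand.z i j}
      else
        tierE {Cand.xx i j} {Cand.h} {Cand.z i j}
  | .t j => tierE ((S j).image fun i => Cand.xx i j) {Cand.h} ∅

/-- A ranking of the candidates (position `0` is first, the largest is last). -/
abbrev Ranking (m n : ℕ) := Cand m n ≃ Fin (Fintype.card (Cand m n))

/-- Points for position `p` under the scoring rule `(2,1,...,1,0)`. -/
def pts (M : ℕ) (p : Fin M) : ℕ :=
  if p.val = 0 then 2 else if p.val = M - 1 then 0 else 1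

/-- An assignment of rankings extends the partial votes of the reduction. -/
def ExtendsRed (m n k : ℕ) (hn : 0 < n) (S : Fin n → Finset (Fin m))
    (Ext : Idx m n k → Ranking m n) : Prop :=
  ∀ idx a b, pvote m n k hn S idx a b → Ext idx a < Ext idx b

/-- Score of candidate `d` from the extended partial votes under `(2,1,...,1,0)`. -/
def pScore {m n k : ℕ} (Ext : Idx m n k → Ranking m n) (d : Cand m n) : ℕ :=
  ∑ idx : Idx m n k, pts _ (Ext idx d)

/-- Number of extended partial votes that rank `d` first. -/
def firstCnt {m n k : ℕ} (Ext : Idx m n k → Ranking m n) (d : Cand m n) : ℕ :=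
  (Finset.univ.filter fun idx : Idx m n k => (Ext idx d).val = 0).card

/-- Number of extended partial votes that rank `d` last. -/
def lastCnt {m n k : ℕ} (Ext : Idx m n k → Ranking m n) (d : Cand m n) : ℕ :=
  (Finset.univ.filter fun idx : Idx m n k =>
    (Ext idx d).val = Fintype.card (Cand m n) - 1).card

/-- No candidate exceeds its maximum partial score with respect to `c`:
`s(x_i) = |V^p| - 1`, `s(x_i^j) = |V^p| + 1`, `s(y_i^j) = s(z_i^j) = |V^p|`,
`s(h) ≥ 2|V^p|`. -/
def WithinBounds {m n k : ℕ} (Ext : Idx m n k → Ranking m n) : Prop :=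
  (∀ i, pScore Ext (Cand.x i) ≤ Fintype.card (Idx m n k) - 1) ∧
  (∀ i j, pScore Ext (Cand.xx i j) ≤ Fintype.card (Idx m n k) + 1) ∧
  (∀ i j, pScore Ext (Cand.y i j) ≤ Fintype.card (Idx m n k)) ∧
  (∀ i j, pScore Ext (Cand.z i j) ≤ Fintype.card (Idx m n k)) ∧
  pScore Ext Cand.h ≤ 2 * Fintype.card (Idx m n k)

/-!
Write `N = |V^p|`. Under `(2,1,…,1,0)` the partial score of a candidate is `N` plus its number
of first places minus its number of last places, so a bound `N + r` allows at most `r` more first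
than last places.

The only votes in which `y_i^j` may be last are `v_i` (for `j = 1`) and `w_i^{j-1}`. If `x_i` is
last in `v_i`, and inductively `z_i^{j-1}` is last in `w_i^{j-1}`, then `y_i^j` is never last,
hence never first, so `z_i^j` must be first in `v_i^j`. Having a first place, `z_i^j` needs a
last place, which it can only get in `w_i^j`; then `x_i^j` is first there. Finally `x_i^j` is
never last, so its bound `N + 1` leaves room for a single first place.
-/

section Ranking

variable {C : Type*} {M : ℕ}

lemma Fin.val_ne_sub_one_of_lt {p q : Fin M} (h : p < q) : p.val ≠ M - 1 := by
  have := q.isLt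
  rw [Fin.lt_def] at h
  omega

lemma Fin.val_ne_zero_of_lt {p q : Fin M} (h : p < q) : q.val ≠ 0 :=
  Nat.ne_zero_of_lt h

lemma tierE_top_or_free_first [DecidableEq C] {t e : C} {B : Finset C} {σ : C ≃ Fin M}
    (hσ : ∀ a b, tierE {t} B {e} a b → σ a < σ b) (hte : t ≠ e) :
    (σ t).val = 0 ∨ (σ e).val = 0 := by
  by_contra! ⟨ht, he⟩
  set b := σ.symm ⟨0, (σ t).pos⟩
  have hb : (σ b).val = 0 := by simp [b]
  have hbt : b ≠ t := fun h => ht (h ▸ hb)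
  have hbe : b ≠ e := fun h => he (h ▸ hb)
  exact Fin.val_ne_zero_of_lt (hσ t b ⟨by simpa, by simpa, Or.inl ⟨by simp, by simpa⟩⟩) hb

end Ranking

section Counting

variable {m n k : ℕ} {Ext : Idx m n k → Ranking m n} {d : Cand m n}

lemma two_le_card_cand : 2 ≤ Fintype.card (Cand m n) :=
  Fintype.one_lt_card_iff_nontrivial.mpr ⟨⟨.c, .h, by simp⟩⟩

lemma pScore_add_lastCnt (Ext : Idx m n k → Ranking m n) (d : Cand m n) :
    pScore Ext d + lastCnt Ext d = Fintype.card (Idx m n k) + firstCnt Ext d := by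
  have hM : 2 ≤ Fintype.card (Cand m n) := two_le_card_cand
  rw [pScore, lastCnt, firstCnt, Finset.card_filter, Finset.card_filter,
    Fintype.card_eq_sum_ones (α := Idx m n k), ← Finset.sum_add_distrib,
    ← Finset.sum_add_distrib]
  refine Finset.sum_congr rfl fun idx _ => ?_
  have := (Ext idx d).isLt
  unfold pts
  split_ifs <;> omega

lemma firstCnt_le_lastCnt_add {r : ℕ} (h : pScore Ext d ≤ Fintype.card (Idx m n k) + r) :
    firstCnt Ext d ≤ lastCnt Ext d + r := by
  have := pScore_add_lastCnt Ext d
  omega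

lemma lastCnt_eq_zero (h : ∀ idx, (Ext idx d).val ≠ Fintype.card (Cand m n) - 1) :
    lastCnt Ext d = 0 := by
  simpa [lastCnt, Finset.filter_eq_empty_iff] using h

lemma firstCnt_pos {idx : Idx m n k} (h : (Ext idx d).val = 0) : 0 < firstCnt Ext d :=
  Finset.card_pos.mpr ⟨idx, by simpa using h⟩

lemma one_lt_firstCnt {idx idx' : Idx m n k} (h : (Ext idx d).val = 0)
    (h' : (Ext idx' d).val = 0) (hne : idx ≠ idx') : 1 < firstCnt Ext d :=
  Finset.one_lt_card.mpr ⟨idx, by simpa using h, idx', by simpa using h', hne⟩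

end Counting

namespace ExtendsRed

variable {m n k : ℕ} {hn : 0 < n} {S : Fin n → Finset (Fin m)} {Ext : Idx m n k → Ranking m n}

lemma exists_tierE_wij (hext : ExtendsRed m n k hn S Ext) (i : Fin m) (j : Fin n) :
    ∃ B : Finset (Cand m n), ∀ a b, tierE {.xx i j} B {.z i j} a b →
      Ext (.wij i j) a < Ext (.wij i j) b := by
  by_cases hj : j.val + 1 < n <;>
    exact ⟨_, fun a b hab => hext _ a b (by simpa [pvote, hj] using hab)⟩

lemma not_last_of_pvote (hext : ExtendsRed m n k hn S Ext) {idx : Idx m n k} {a : Cand m n}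
    (b : Cand m n) (h : pvote m n k hn S idx a b) :
    (Ext idx a).val ≠ Fintype.card (Cand m n) - 1 :=
  Fin.val_ne_sub_one_of_lt (hext idx a b h)

lemma not_last_in_wij (hext : ExtendsRed m n k hn S Ext) {i : Fin m} {j : Fin n}
    {d : Cand m n} (hdz : d ≠ .z i j) (hdh : d ≠ .h)
    (hdy : ∀ hj : j.val + 1 < n, d ≠ .y i ⟨j.val + 1, hj⟩) :
    (Ext (.wij i j) d).val ≠ Fintype.card (Cand m n) - 1 := by
  by_cases hj : j.val + 1 < n
  · exact hext.not_last_of_pvote (.y i ⟨j.val + 1, hj⟩)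
      (by simp [pvote, hj, tierE, hdz, hdy hj])
  · exact hext.not_last_of_pvote .h (by simp [pvote, hj, tierE, hdz, hdh])

lemma xx_not_last (hext : ExtendsRed m n k hn S Ext) (i : Fin m) (j : Fin n)
    (idx : Idx m n k) : (Ext idx (.xx i j)).val ≠ Fintype.card (Cand m n) - 1 := by
  cases idx with
  | one => exact hext.not_last_of_pvote (.x i) (by simp [pvote, tierE])
  | v i' => exact hext.not_last_of_pvote (.x i') (by simp [pvote, tierE])
  | vij => exact hext.not_last_of_pvote .h (by simp [pvote, tierE])
  | wij => exact hext.not_last_in_wij (by simp) (by simp) (by simp)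
  | t => exact hext.not_last_of_pvote .h (by simp [pvote, tierE])

lemma z_not_last_of_ne (hext : ExtendsRed m n k hn S Ext) {i : Fin m} {j : Fin n}
    {idx : Idx m n k} (hv : idx ≠ .vij i j) (hw : idx ≠ .wij i j) :
    (Ext idx (.z i j)).val ≠ Fintype.card (Cand m n) - 1 := by
  cases idx with
  | one => exact hext.not_last_of_pvote (.x i) (by simp [pvote, tierE])
  | v i' => exact hext.not_last_of_pvote (.x i') (by simp [pvote, tierE])
  | vij => exact hext.not_last_of_pvote .h (by simp_all [pvote, tierE, eq_comm])
  | wij => exact hext.not_last_in_wij (by simp_all [eq_comm]) (by simp) (by simp)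
  | t => exact hext.not_last_of_pvote .h (by simp [pvote, tierE])

lemma y_not_last (hext : ExtendsRed m n k hn S Ext) {i : Fin m} {j : Fin n}
    (hlast : (Ext (.v i) (.x i)).val = Fintype.card (Cand m n) - 1)
    (hprev : ∀ j' : Fin n, j'.val + 1 = j.val →
      (Ext (.wij i j') (.z i j')).val = Fintype.card (Cand m n) - 1)
    (idx : Idx m n k) : (Ext idx (.y i j)).val ≠ Fintype.card (Cand m n) - 1 := by
  cases idx with
  | one => exact hext.not_last_of_pvote (.x i) (by simp [pvote, tierE])
  | v i' =>
    by_cases hi : i' = i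
    · subst hi
      exact fun h => Fin.val_ne_of_ne ((Ext _).injective.ne (by simp)) (hlast.trans h.symm)
    · exact hext.not_last_of_pvote (.x i') (by simp [pvote, tierE, Ne.symm hi])
  | vij => exact hext.not_last_of_pvote .h (by simp [pvote, tierE])
  | wij i' j' =>
    by_cases hprec : i' = i ∧ j'.val + 1 = j.val
    · obtain ⟨rfl, hj'⟩ := hprec
      exact fun h =>
        Fin.val_ne_of_ne ((Ext _).injective.ne (by simp)) ((hprev j' hj').trans h.symm)
    · refine hext.not_last_in_wij (by simp) (by simp) fun hj h => hprec ?_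
      obtain ⟨rfl, rfl⟩ := Cand.y.inj h
      exact ⟨rfl, rfl⟩
  | t => exact hext.not_last_of_pvote .h (by simp [pvote, tierE])

lemma z_first_in_vij (hext : ExtendsRed m n k hn S Ext) {i : Fin m} {j : Fin n}
    (hy : pScore Ext (.y i j) ≤ Fintype.card (Idx m n k)) (hylast : lastCnt Ext (.y i j) = 0) :
    (Ext (.vij i j) (.z i j)).val = 0 := by
  have hyfirst : firstCnt Ext (.y i j) = 0 := by
    simpa [hylast] using firstCnt_le_lastCnt_add (r := 0) hy
  refine (tierE_top_or_free_first (hext (.vij i j)) (by simp)).resolve_left fun h => ?_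
  exact (firstCnt_pos h).ne' hyfirst

lemma z_last_in_wij (hext : ExtendsRed m n k hn S Ext) {i : Fin m} {j : Fin n}
    (hz : pScore Ext (.z i j) ≤ Fintype.card (Idx m n k))
    (hzfirst : (Ext (.vij i j) (.z i j)).val = 0) :
    (Ext (.wij i j) (.z i j)).val = Fintype.card (Cand m n) - 1 := by
  by_contra hzw
  have hM : 2 ≤ Fintype.card (Cand m n) := two_le_card_cand
  have hzlast : lastCnt Ext (.z i j) = 0 := lastCnt_eq_zero fun idx => by
    by_cases hv : idx = .vij i j
    · subst hv; omega
    by_cases hw : idx = .wij i j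
    · exact hw ▸ hzw
    exact hext.z_not_last_of_ne hv hw
  have := firstCnt_le_lastCnt_add (r := 0) hz
  have := firstCnt_pos hzfirst
  omega

lemma xx_first_in_wij (hext : ExtendsRed m n k hn S Ext) {i : Fin m} {j : Fin n}
    (hzlast : (Ext (.wij i j) (.z i j)).val = Fintype.card (Cand m n) - 1) :
    (Ext (.wij i j) (.xx i j)).val = 0 := by
  have hM : 2 ≤ Fintype.card (Cand m n) := two_le_card_cand
  obtain ⟨B, hB⟩ := hext.exists_tierE_wij i j
  exact (tierE_top_or_free_first hB (by simp)).resolve_right (by omega)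

lemma z_last_in_wij_of_x_last (hext : ExtendsRed m n k hn S Ext) (hbounds : WithinBounds Ext)
    {i : Fin m} (hlast : (Ext (.v i) (.x i)).val = Fintype.card (Cand m n) - 1) (j : Fin n) :
    (Ext (.wij i j) (.z i j)).val = Fintype.card (Cand m n) - 1 := by
  obtain ⟨-, -, hby, hbz, -⟩ := hbounds
  have step : ∀ j : Fin n, (∀ j' : Fin n, j'.val + 1 = j.val →
      (Ext (.wij i j') (.z i j')).val = Fintype.card (Cand m n) - 1) →
      (Ext (.wij i j) (.z i j)).val = Fintype.card (Cand m n) - 1 := fun j hprev =>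
    hext.z_last_in_wij (hbz i j)
      (hext.z_first_in_vij (hby i j) (lastCnt_eq_zero (hext.y_not_last hlast hprev)))
  suffices ∀ t, ∀ j : Fin n, j.val = t →
      (Ext (.wij i j) (.z i j)).val = Fintype.card (Cand m n) - 1 from this _ j rfl
  intro t
  induction t with
  | zero => exact fun j _ => step j fun j' hj' => by omega
  | succ t ih => exact fun j hj => step j fun j' hj' => ih j' (by omega)

end ExtendsRed

/-- In any extension respecting the maximum partial scores, if `x_i` is ranked
last in vote `v_i`, then for every `j` the candidate `x_i^j` takes the first
position in vote `w_i^j`, and hence is not first in any vote of `V_3^p`. -/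
theorem x_last_in_v_forces_xx_first_in_w
    (m n k : ℕ) (hn : 0 < n) (S : Fin n → Finset (Fin m))
    (Ext : Idx m n k → Ranking m n)
    (hext : ExtendsRed m n k hn S Ext)
    (hbounds : WithinBounds Ext)
    (i : Fin m)
    (hlast : (Ext (Idx.v i) (Cand.x i)).val = Fintype.card (Cand m n) - 1) :
    ∀ j : Fin n,
      (Ext (Idx.wij i j) (Cand.xx i j)).val = 0 ∧
      ∀ j' : Fin n, (Ext (Idx.t j') (Cand.xx i j)).val ≠ 0 := by
  intro j
  have hfirst := hext.xx_first_in_wij (hext.z_last_in_wij_of_x_last hbounds hlast j)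
  refine ⟨hfirst, fun j' ht => ?_⟩
  have hle := firstCnt_le_lastCnt_add (hbounds.2.1 i j)
  rw [lastCnt_eq_zero (hext.xx_not_last i j)] at hle
  exact (one_lt_firstCnt hfirst ht (by simp)).not_ge hle
end

section
/- The correctness of the reduction: the Hitting Set instance (X, S, k) has a hitting set of size at most k if and only if the designated candidate c is a possible winner of the constructed election (C, V^ℓ ∪ V^p) under the scoring rule (2,1,...,1,0). -/
/-- Score of candidate `d` from a list of linear votes under `(2,1,...,1,0)`. -/
def lScore {m n : ℕ} (Vl : List (Ranking m n)) (d : Cand m n) : ℕ :=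
  (Vl.map fun v => pts _ (v d)).sum

/-- The maximum partial scores with respect to `c` specified by the reduction
(`|V^p| = Fintype.card (Idx m n k)`; the value for `c` itself is irrelevant). -/
def maxps (m n k : ℕ) : Cand m n → ℕ
  | Cand.c => 0
  | Cand.h => 2 * Fintype.card (Idx m n k)
  | Cand.x _ => Fintype.card (Idx m n k) - 1
  | Cand.xx _ _ => Fintype.card (Idx m n k) + 1
  | Cand.y _ _ => Fintype.card (Idx m n k)
  | Cand.z _ _ => Fintype.card (Idx m n k)

/-
Under the rule `(2,1,...,1,0)` a vote gives a candidate `1 + [first] - [last]` points. No partial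
vote can put `c` first or last, so `c` scores `|V^p|` there, and by the calibration `c` wins iff
every `x_i` is last more often than first, every `x_i^j` is first at most once more often than
last, and every `y_i^j`, `z_i^j` is first at most as often as last.

The `k` votes of `V_1^p` put `k` of the `x_i` last, and these hit every `S_j`: if `x_i^j` is first
in `T_j`, it cannot also be first in `w_i^j` (it is never last), so `z_i^j` is first there, hence
last in `v_i^j`, which leaves `y_i^j` first in `v_i^j`. Then `y_i^j` must be last somewhere: in
`v_i` if `j = 1`, otherwise in `w_i^{j-1}`, which in turn leaves `y_i^{j-1}` first in `v_i^{j-1}`.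
Descending, `y_i^1` is last in `v_i`, so `x_i`, which must be last somewhere, is last in a vote of
`V_1^p`. Conversely, a hitting set `X'` tells each vote which candidate to put first and which
last.
-/

section Ranking

variable {α : Type*} [Fintype α]

lemma pts_add_ite_eq {M : ℕ} (hM : 2 ≤ M) (p : Fin M) :
    pts M p + (if p.val = M - 1 then 1 else 0) = 1 + if p.val = 0 then 1 else 0 := by
  unfold pts; split_ifs <;> omega

lemma pts_le_two {M : ℕ} (p : Fin M) : pts M p ≤ 2 := by
  unfold pts; split_ifs <;> omega

lemma exists_ranking_of_rank (rank : α → ℕ) :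
    ∃ r : α ≃ Fin (Fintype.card α), ∀ a b, rank a < rank b → r a < r b := by
  let e := Fintype.equivFin α
  let _ : LinearOrder α := LinearOrder.lift' (fun a => toLex (rank a, e a))
    fun a b h => e.injective (congrArg (fun p => (ofLex p).2) h)
  let o := (Fintype.orderIsoFinOfCardEq α rfl).symm
  exact ⟨o.toEquiv, fun a b h => o.lt_iff_lt.2 (Prod.Lex.lt_iff.2 (Or.inl h))⟩

lemma val_eq_zero_iff_of_forall_lt {r : α ≃ Fin (Fintype.card α)} {f : α}
    (hf : ∀ a, a ≠ f → r f < r a) (a : α) : (r a).val = 0 ↔ a = f := by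
  refine ⟨fun ha => by_contra fun haf => ?_, ?_⟩
  · have := hf a haf
    rw [Fin.lt_def, ha] at this
    omega
  · rintro rfl
    by_contra h0
    have hpos : 0 < Fintype.card α := (r a).pos
    have := hf (r.symm ⟨0, hpos⟩) (fun h => h0 (by rw [← h]; simp))
    simp [Fin.lt_def] at this

lemma val_eq_card_sub_one_iff_of_forall_lt {r : α ≃ Fin (Fintype.card α)} {l : α}
    (hl : ∀ a, a ≠ l → r a < r l) (a : α) :
    (r a).val = Fintype.card α - 1 ↔ a = l := by
  refine ⟨fun ha => by_contra fun hal => ?_, ?_⟩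
  · have := hl a hal
    rw [Fin.lt_def, ha] at this
    omega
  · rintro rfl
    by_contra h0
    have hpos : 0 < Fintype.card α := (r a).pos
    have := hl (r.symm ⟨_, Nat.sub_one_lt_of_lt hpos⟩) (fun h => h0 (by rw [← h]; simp))
    simp [Fin.lt_def] at this
    omega

lemma exists_val_eq_zero [Nonempty α] (r : α ≃ Fin (Fintype.card α)) : ∃ a, (r a).val = 0 :=
  ⟨r.symm ⟨0, Fintype.card_pos⟩, by simp⟩

lemma exists_val_eq_card_sub_one [Nonempty α] (r : α ≃ Fin (Fintype.card α)) :
    ∃ a, (r a).val = Fintype.card α - 1 :=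
  ⟨r.symm ⟨_, Nat.sub_one_lt_of_lt Fintype.card_pos⟩, by simp⟩

variable [DecidableEq α] {T B E : Finset α}

lemma exists_ranking_extending_tierE {f l : α} (hf : f ∈ T ∨ f ∈ E) (hl : l ∈ B ∨ l ∈ E)
    (hfl : f ≠ l) (hfB : f ∉ B) (hlT : l ∉ T) (hTB : Disjoint T B) :
    ∃ r : α ≃ Fin (Fintype.card α), (∀ a b, tierE T B E a b → r a < r b) ∧
      (∀ a, (r a).val = 0 ↔ a = f) ∧ (∀ a, (r a).val = Fintype.card α - 1 ↔ a = l) := by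
  let rank : α → ℕ := fun a =>
    if a = f then 0 else if a = l then 4 else if a ∈ T then 1 else if a ∈ B then 3 else 2
  obtain ⟨r, hr⟩ := exists_ranking_of_rank rank
  refine ⟨r, ?_, val_eq_zero_iff_of_forall_lt fun a ha => hr _ _ ?_,
    val_eq_card_sub_one_iff_of_forall_lt fun a ha => hr _ _ ?_⟩
  · rintro a b ⟨haE, hbE, ⟨haT, hbT⟩ | ⟨hbB, haB⟩⟩ <;> apply hr <;> simp only [rank] <;>
      split_ifs <;> simp_all [Finset.disjoint_left]
  · simp only [rank]; split_ifs <;> simp_all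
  · simp only [rank]; split_ifs <;> simp_all

lemma tierE_mem_of_val_eq_zero {r : α ≃ Fin (Fintype.card α)}
    (hr : ∀ a b, tierE T B E a b → r a < r b) (hT : ∃ a ∈ T, a ∉ E) {d : α}
    (hd : (r d).val = 0) : d ∈ T ∨ d ∈ E := by
  by_contra! h
  obtain ⟨a, haT, haE⟩ := hT
  have := hr a d ⟨haE, h.2, Or.inl ⟨haT, h.1⟩⟩
  rw [Fin.lt_def, hd] at this
  omega

lemma tierE_mem_of_val_eq_card_sub_one {r : α ≃ Fin (Fintype.card α)}
    (hr : ∀ a b, tierE T B E a b → r a < r b) (hB : ∃ b ∈ B, b ∉ E) {d : α}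
    (hd : (r d).val = Fintype.card α - 1) : d ∈ B ∨ d ∈ E := by
  by_contra! h
  obtain ⟨b, hbB, hbE⟩ := hB
  have := hr d b ⟨h.2, hbE, Or.inr ⟨hbB, h.1⟩⟩
  rw [Fin.lt_def, hd] at this
  omega

end Ranking

lemma Finset.exists_fin_subset_range {β : Type*} {s : Finset β} {k : ℕ} (hs : s.card ≤ k)
    (b : β) : ∃ g : Fin k → β, ↑s ⊆ Set.range g := by
  refine ⟨fun a => if h : a.val < s.card then s.equivFin.symm ⟨a, h⟩ else b, fun x hx => ?_⟩
  refine ⟨⟨s.equivFin ⟨x, hx⟩, (Fin.is_lt _).trans_le hs⟩, ?_⟩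
  simp

instance {m n : ℕ} : Nontrivial (Cand m n) := ⟨⟨.c, .h, by simp⟩⟩

namespace HittingSetReduction

variable {m n k : ℕ}

def pvoteTop (S : Fin n → Finset (Fin m)) : Idx m n k → Finset (Cand m n)
  | .one _ | .v _ => {.h}
  | .vij i j => {.y i j}
  | .wij i j => {.xx i j}
  | .t j => (S j).image fun i => .xx i j

def pvoteBottom (hn : 0 < n) : Idx m n k → Finset (Cand m n)
  | .one _ => Finset.univ.image .x
  | .v i => {.x i, .y i ⟨0, hn⟩}
  | .vij _ _ | .t _ => {.h}
  | .wij i j => if hj : j.val + 1 < n then {.y i ⟨j.val + 1, hj⟩} else {.h}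

def pvoteFree : Idx m n k → Finset (Cand m n)
  | .vij i j | .wij i j => {.z i j}
  | .one _ | .v _ | .t _ => ∅

lemma pvote_eq_tierE (hn : 0 < n) (S : Fin n → Finset (Fin m)) (idx : Idx m n k) :
    pvote m n k hn S idx = tierE (pvoteTop S idx) (pvoteBottom hn idx) (pvoteFree idx) := by
  cases idx <;> simp only [pvote, pvoteTop, pvoteBottom, pvoteFree]
  split_ifs <;> rfl

section Scores

variable (Ext : Idx m n k → Ranking m n) (d : Cand m n)

lemma pScore_add_lastCnt :
    pScore Ext d + lastCnt Ext d = Fintype.card (Idx m n k) + firstCnt Ext d := by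
  simp only [pScore, lastCnt, firstCnt, Finset.card_filter, ← Finset.sum_add_distrib]
  rw [Finset.sum_congr rfl fun idx _ => pts_add_ite_eq Fintype.one_lt_card (Ext idx d),
    Finset.sum_add_distrib]
  simp

lemma pScore_le_two_mul_card : pScore Ext d ≤ 2 * Fintype.card (Idx m n k) := by
  simpa [pScore, mul_comm] using
    Finset.sum_le_sum fun idx (_ : idx ∈ Finset.univ) => pts_le_two (Ext idx d)

lemma exists_last_of_pScore_lt (h : pScore Ext d < Fintype.card (Idx m n k) + firstCnt Ext d) :
    ∃ idx, (Ext idx d).val = Fintype.card (Cand m n) - 1 := by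
  have hpos : 0 < lastCnt Ext d := by have := pScore_add_lastCnt Ext d; omega
  simpa [lastCnt, Finset.card_pos, Finset.filter_nonempty_iff] using hpos

lemma firstCnt_pos {idx : Idx m n k} (h : (Ext idx d).val = 0) : 0 < firstCnt Ext d :=
  Finset.card_pos.2 ⟨idx, by simpa using h⟩

lemma one_lt_firstCnt {idx₁ idx₂ : Idx m n k} (hne : idx₁ ≠ idx₂) (h₁ : (Ext idx₁ d).val = 0)
    (h₂ : (Ext idx₂ d).val = 0) : 1 < firstCnt Ext d :=
  Finset.one_lt_card.2 ⟨idx₁, by simpa using h₁, idx₂, by simpa using h₂, hne⟩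

lemma lastCnt_pos {idx : Idx m n k} (h : (Ext idx d).val = Fintype.card (Cand m n) - 1) :
    0 < lastCnt Ext d :=
  Finset.card_pos.2 ⟨idx, by simpa using h⟩

lemma firstCnt_eq_zero (h : ∀ idx, (Ext idx d).val ≠ 0) : firstCnt Ext d = 0 :=
  Finset.card_eq_zero.2 (Finset.filter_eq_empty_iff.2 fun idx _ => h idx)

end Scores

section Extensions

variable {hn : 0 < n} {S : Fin n → Finset (Fin m)} {Ext : Idx m n k → Ranking m n}
  {idx : Idx m n k} {d : Cand m n}

lemma lt_of_tierE (hExt : ExtendsRed m n k hn S Ext) {a b : Cand m n}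
    (h : tierE (pvoteTop S idx) (pvoteBottom hn idx) (pvoteFree idx) a b) :
    Ext idx a < Ext idx b :=
  hExt idx a b (by rwa [pvote_eq_tierE])

lemma mem_pvoteTop_of_first (hS : ∀ j, (S j).Nonempty) (hExt : ExtendsRed m n k hn S Ext)
    (h : (Ext idx d).val = 0) : d ∈ pvoteTop S idx ∨ d ∈ pvoteFree idx := by
  refine tierE_mem_of_val_eq_zero (fun a b => lt_of_tierE hExt) ?_ h
  cases idx with
  | t j => obtain ⟨i, hi⟩ := hS j; exact ⟨_, Finset.mem_image_of_mem _ hi, by simp [pvoteFree]⟩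
  | _ => simp [pvoteTop, pvoteFree]

lemma mem_pvoteBottom_of_last (hS : ∀ j, (S j).Nonempty) (hExt : ExtendsRed m n k hn S Ext)
    (h : (Ext idx d).val = Fintype.card (Cand m n) - 1) :
    d ∈ pvoteBottom hn idx ∨ d ∈ pvoteFree idx := by
  refine tierE_mem_of_val_eq_card_sub_one (fun a b => lt_of_tierE hExt) ?_ h
  obtain ⟨i₀, -⟩ := hS ⟨0, hn⟩
  cases idx with
  | one => exact ⟨.x i₀, by simp [pvoteBottom, pvoteFree]⟩
  | wij i j => simp only [pvoteBottom]; split_ifs <;> simp [pvoteFree]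
  | _ => simp [pvoteBottom, pvoteFree]

lemma pScore_c_eq_card (hS : ∀ j, (S j).Nonempty) (hExt : ExtendsRed m n k hn S Ext) :
    pScore Ext .c = Fintype.card (Idx m n k) := by
  have hmid (idx : Idx m n k) : pts _ (Ext idx .c) = 1 := by
    have hfirst : (Ext idx .c).val ≠ 0 := fun h => by
      have := mem_pvoteTop_of_first hS hExt h
      cases idx <;> simp [pvoteTop, pvoteFree] at this
    have hlast : (Ext idx .c).val ≠ Fintype.card (Cand m n) - 1 := fun h => by
      have := mem_pvoteBottom_of_last hS hExt h
      cases idx <;> simp [pvoteBottom, pvoteFree] at this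
      split_ifs at this <;> simp at this
    simpa [hfirst, hlast] using pts_add_ite_eq Fintype.one_lt_card (Ext idx .c)
  simp [pScore, hmid]

lemma first_t (hS : ∀ j, (S j).Nonempty) (hExt : ExtendsRed m n k hn S Ext) {j : Fin n}
    (h : (Ext (.t j) d).val = 0) : ∃ i ∈ S j, d = .xx i j := by
  simpa [pvoteTop, pvoteFree, eq_comm] using mem_pvoteTop_of_first hS hExt h

lemma first_vij (hS : ∀ j, (S j).Nonempty) (hExt : ExtendsRed m n k hn S Ext) {i : Fin m}
    {j : Fin n} (h : (Ext (.vij i j) d).val = 0) : d = .y i j ∨ d = .z i j := by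
  simpa [pvoteTop, pvoteFree] using mem_pvoteTop_of_first hS hExt h

lemma first_wij (hS : ∀ j, (S j).Nonempty) (hExt : ExtendsRed m n k hn S Ext) {i : Fin m}
    {j : Fin n} (h : (Ext (.wij i j) d).val = 0) : d = .xx i j ∨ d = .z i j := by
  simpa [pvoteTop, pvoteFree] using mem_pvoteTop_of_first hS hExt h

lemma last_one (hS : ∀ j, (S j).Nonempty) (hExt : ExtendsRed m n k hn S Ext) {a : Fin k}
    (h : (Ext (.one a) d).val = Fintype.card (Cand m n) - 1) : ∃ i, d = .x i := by
  simpa [pvoteBottom, pvoteFree, eq_comm] using mem_pvoteBottom_of_last hS hExt h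

lemma last_x (hS : ∀ j, (S j).Nonempty) (hExt : ExtendsRed m n k hn S Ext) {i : Fin m}
    (h : (Ext idx (.x i)).val = Fintype.card (Cand m n) - 1) :
    (∃ a, idx = .one a) ∨ idx = .v i := by
  have := mem_pvoteBottom_of_last hS hExt h
  cases idx <;> simp_all [pvoteBottom, pvoteFree]
  split_ifs at this <;> simp_all

lemma last_y (hS : ∀ j, (S j).Nonempty) (hExt : ExtendsRed m n k hn S Ext) {i : Fin m}
    {j : Fin n} (h : (Ext idx (.y i j)).val = Fintype.card (Cand m n) - 1) :
    (idx = .v i ∧ j.val = 0) ∨ ∃ j' : Fin n, idx = .wij i j' ∧ j'.val + 1 = j.val := by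
  have := mem_pvoteBottom_of_last hS hExt h
  cases idx <;> simp_all [pvoteBottom, pvoteFree]
  split_ifs at this <;> simp_all

lemma last_z (hS : ∀ j, (S j).Nonempty) (hExt : ExtendsRed m n k hn S Ext) {i : Fin m}
    {j : Fin n} (h : (Ext idx (.z i j)).val = Fintype.card (Cand m n) - 1) :
    idx = .vij i j ∨ idx = .wij i j := by
  have := mem_pvoteBottom_of_last hS hExt h
  cases idx <;> simp_all [pvoteBottom, pvoteFree]
  split_ifs at this <;> simp_all

lemma not_last_xx (hS : ∀ j, (S j).Nonempty) (hExt : ExtendsRed m n k hn S Ext) {i : Fin m}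
    {j : Fin n} : (Ext idx (.xx i j)).val ≠ Fintype.card (Cand m n) - 1 := fun h => by
  have := mem_pvoteBottom_of_last hS hExt h
  cases idx <;> simp_all [pvoteBottom, pvoteFree]
  split_ifs at this <;> simp_all

end Extensions

section Forward

variable {hn : 0 < n} {S : Fin n → Finset (Fin m)} {X' : Finset (Fin m)} {sel : Fin n → Fin m}
  {g : Fin k → Fin m}

def firstChoice (X' : Finset (Fin m)) (sel : Fin n → Fin m) : Idx m n k → Cand m n
  | .one _ | .v _ => .h
  | .vij i j => if i ∈ X' then .y i j else .z i j
  | .wij i j => if i ∈ X' then .z i j else .xx i j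
  | .t j => .xx (sel j) j

def lastChoice (hn : 0 < n) (X' : Finset (Fin m)) (g : Fin k → Fin m) : Idx m n k → Cand m n
  | .one a => .x (g a)
  | .v i => if i ∈ X' then .y i ⟨0, hn⟩ else .x i
  | .vij i j => if i ∈ X' then .z i j else .h
  | .wij i j =>
      if i ∈ X' then (if hj : j.val + 1 < n then .y i ⟨j.val + 1, hj⟩ else .h) else .z i j
  | .t _ => .h

lemma exists_extension_firstChoice_lastChoice (hsel : ∀ j, sel j ∈ S j) :
    ∃ Ext : Idx m n k → Ranking m n, ExtendsRed m n k hn S Ext ∧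
      (∀ idx a, (Ext idx a).val = 0 ↔ a = firstChoice X' sel idx) ∧
      (∀ idx a, (Ext idx a).val = Fintype.card (Cand m n) - 1 ↔ a = lastChoice hn X' g idx) := by
  have : ∀ idx : Idx m n k, ∃ r : Ranking m n,
      (∀ a b, tierE (pvoteTop S idx) (pvoteBottom hn idx) (pvoteFree idx) a b → r a < r b) ∧
      (∀ a, (r a).val = 0 ↔ a = firstChoice X' sel idx) ∧
      (∀ a, (r a).val = Fintype.card (Cand m n) - 1 ↔ a = lastChoice hn X' g idx) := fun idx => by
    refine exists_ranking_extending_tierE ?_ ?_ ?_ ?_ ?_ ?_ <;> cases idx <;>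
      simp only [firstChoice, lastChoice, pvoteTop, pvoteBottom, pvoteFree] <;> (try split_ifs) <;>
      simp_all [Finset.disjoint_left]
  choose Ext hExt hfirst hlast using this
  exact ⟨Ext, fun idx a b hab => hExt idx a b (by rwa [← pvote_eq_tierE]), hfirst, hlast⟩

lemma firstChoice_injOn (hsel : ∀ j, sel j ∈ X') {idx₁ idx₂ : Idx m n k}
    (h : firstChoice X' sel idx₁ = firstChoice X' sel idx₂) (hh : firstChoice X' sel idx₁ ≠ .h) :
    idx₁ = idx₂ := by
  cases idx₁ <;> cases idx₂ <;> simp only [firstChoice] at h hh ⊢ <;> (try split_ifs at h hh) <;>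
    aesop

lemma firstChoice_ne_x {idx : Idx m n k} {i : Fin m} : firstChoice X' sel idx ≠ .x i := by
  cases idx <;> simp only [firstChoice] <;> (try split_ifs) <;> simp

lemma firstChoice_ne_y {idx : Idx m n k} {i : Fin m} {j : Fin n} (hi : i ∉ X') :
    firstChoice X' sel idx ≠ .y i j := by
  cases idx <;> simp only [firstChoice] <;> (try split_ifs) <;> aesop

lemma firstCnt_le_one_of_choices {Ext : Idx m n k → Ranking m n}
    (hfirst : ∀ idx a, (Ext idx a).val = 0 ↔ a = firstChoice X' sel idx)
    (hsel : ∀ j, sel j ∈ X') {d : Cand m n} (hdh : d ≠ .h) : firstCnt Ext d ≤ 1 :=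
  Finset.card_le_one.2 fun a ha b hb => by
    simp only [Finset.mem_filter, Finset.mem_univ, true_and, hfirst] at ha hb
    exact firstChoice_injOn hsel (ha ▸ hb) (ha ▸ hdh)

lemma pScore_le_maxps_of_choices {Ext : Idx m n k → Ranking m n}
    (hfirst : ∀ idx a, (Ext idx a).val = 0 ↔ a = firstChoice X' sel idx)
    (hlast : ∀ idx a, (Ext idx a).val = Fintype.card (Cand m n) - 1 ↔ a = lastChoice hn X' g idx)
    (hsel : ∀ j, sel j ∈ X') (hg : ↑X' ⊆ Set.range g) {d : Cand m n} (hdc : d ≠ .c) :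
    pScore Ext d ≤ maxps m n k d := by
  have hid := pScore_add_lastCnt Ext d
  have first_le_one (hdh : d ≠ .h) := firstCnt_le_one_of_choices hfirst hsel hdh
  have last_pos (idx) (h : d = lastChoice hn X' g idx) : 0 < lastCnt Ext d :=
    lastCnt_pos Ext d ((hlast idx d).2 h)
  cases d with
  | c => exact absurd rfl hdc
  | h => exact pScore_le_two_mul_card Ext _
  | x i =>
    have : firstCnt Ext (.x i) = 0 :=
      firstCnt_eq_zero Ext _ fun idx h => firstChoice_ne_x ((hfirst idx _).1 h).symm
    have : 0 < lastCnt Ext (.x i) := by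
      by_cases hi : i ∈ X'
      · obtain ⟨a, rfl⟩ := hg hi
        exact last_pos (.one a) rfl
      · exact last_pos (.v i) (by simp [lastChoice, hi])
    simp only [maxps]; omega
  | xx i j => have := first_le_one (by simp); simp only [maxps]; omega
  | y i j =>
    by_cases hi : i ∈ X'
    · have := first_le_one (by simp)
      have : 0 < lastCnt Ext (.y i j) := by
        obtain ⟨_ | j, hj⟩ := j
        · exact last_pos (.v i) (by simp [lastChoice, hi])
        · exact last_pos (.wij i ⟨j, by omega⟩) (by simp [lastChoice, hi, hj])
      simp only [maxps]; omega
    · have : firstCnt Ext (.y i j) = 0 :=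
        firstCnt_eq_zero Ext _ fun idx h => firstChoice_ne_y hi ((hfirst idx _).1 h).symm
      simp only [maxps]; omega
  | z i j =>
    have := first_le_one (by simp)
    have : 0 < lastCnt Ext (.z i j) := by
      by_cases hi : i ∈ X'
      · exact last_pos (.vij i j) (by simp [lastChoice, hi])
      · exact last_pos (.wij i j) (by simp [lastChoice, hi])
    simp only [maxps]; omega

theorem exists_extension_le_maxps (hcard : X'.card ≤ k)
    (hhit : ∀ j, (X' ∩ S j).Nonempty) :
    ∃ Ext : Idx m n k → Ranking m n, ExtendsRed m n k hn S Ext ∧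
      ∀ d, d ≠ .c → pScore Ext d ≤ maxps m n k d := by
  choose sel hsel using hhit
  simp only [Finset.mem_inter] at hsel
  obtain ⟨g, hg⟩ := X'.exists_fin_subset_range hcard (sel ⟨0, hn⟩)
  obtain ⟨Ext, hExt, hfirst, hlast⟩ :=
    exists_extension_firstChoice_lastChoice (X' := X') (g := g) fun j => (hsel j).2
  exact ⟨Ext, hExt, fun d => pScore_le_maxps_of_choices hfirst hlast (fun j => (hsel j).1) hg⟩

end Forward

section Backward

variable {hn : 0 < n} {S : Fin n → Finset (Fin m)} {Ext : Idx m n k → Ranking m n}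
  {i : Fin m} {j : Fin n}

lemma exists_last_of_first_z (hb : ∀ d, d ≠ .c → pScore Ext d ≤ maxps m n k d) {idx : Idx m n k}
    (h : (Ext idx (.z i j)).val = 0) :
    ∃ idx', (Ext idx' (.z i j)).val = Fintype.card (Cand m n) - 1 := by
  have := hb (.z i j) (by simp)
  have := firstCnt_pos Ext _ h
  exact exists_last_of_pScore_lt Ext _ (by simp only [maxps] at *; omega)

lemma last_wij_of_first_vij (hS : ∀ j, (S j).Nonempty) (hExt : ExtendsRed m n k hn S Ext)
    (hb : ∀ d, d ≠ .c → pScore Ext d ≤ maxps m n k d) (h : (Ext (.vij i j) (.z i j)).val = 0) :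
    (Ext (.wij i j) (.z i j)).val = Fintype.card (Cand m n) - 1 := by
  obtain ⟨idx, hidx⟩ := exists_last_of_first_z hb h
  rcases last_z hS hExt hidx with rfl | rfl
  · have : 1 < Fintype.card (Cand m n) := Fintype.one_lt_card
    omega
  · exact hidx

lemma last_vij_of_first_wij (hS : ∀ j, (S j).Nonempty) (hExt : ExtendsRed m n k hn S Ext)
    (hb : ∀ d, d ≠ .c → pScore Ext d ≤ maxps m n k d) (h : (Ext (.wij i j) (.z i j)).val = 0) :
    (Ext (.vij i j) (.z i j)).val = Fintype.card (Cand m n) - 1 := by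
  obtain ⟨idx, hidx⟩ := exists_last_of_first_z hb h
  rcases last_z hS hExt hidx with rfl | rfl
  · exact hidx
  · have : 1 < Fintype.card (Cand m n) := Fintype.one_lt_card
    omega

lemma first_y_vij_of_last_z (hS : ∀ j, (S j).Nonempty) (hExt : ExtendsRed m n k hn S Ext)
    (h : (Ext (.vij i j) (.z i j)).val = Fintype.card (Cand m n) - 1) :
    (Ext (.vij i j) (.y i j)).val = 0 := by
  obtain ⟨d, hd⟩ := exists_val_eq_zero (Ext (.vij i j))
  rcases first_vij hS hExt hd with rfl | rfl
  · exact hd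
  · have : 1 < Fintype.card (Cand m n) := Fintype.one_lt_card
    omega

lemma first_y_vij_of_last_wij (hS : ∀ j, (S j).Nonempty) (hExt : ExtendsRed m n k hn S Ext)
    (hb : ∀ d, d ≠ .c → pScore Ext d ≤ maxps m n k d) {d : Cand m n} (hdz : d ≠ .z i j)
    (h : (Ext (.wij i j) d).val = Fintype.card (Cand m n) - 1) :
    (Ext (.vij i j) (.y i j)).val = 0 := by
  obtain ⟨d', hd'⟩ := exists_val_eq_zero (Ext (.vij i j))
  rcases first_vij hS hExt hd' with rfl | rfl
  · exact hd'
  · have hz := last_wij_of_first_vij hS hExt hb hd'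
    exact absurd ((Ext _).injective (Fin.ext (h.trans hz.symm))) hdz

lemma exists_last_one_of_first_vij (hS : ∀ j, (S j).Nonempty)
    (hExt : ExtendsRed m n k hn S Ext) (hb : ∀ d, d ≠ .c → pScore Ext d ≤ maxps m n k d)
    (j : Fin n) (h : (Ext (.vij i j) (.y i j)).val = 0) :
    ∃ a, (Ext (.one a) (.x i)).val = Fintype.card (Cand m n) - 1 := by
  have hy := hb (.y i j) (by simp)
  have := firstCnt_pos Ext _ h
  obtain ⟨idx, hidx⟩ := exists_last_of_pScore_lt Ext (.y i j) (by simp only [maxps] at *; omega)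
  rcases last_y hS hExt hidx with ⟨rfl, -⟩ | ⟨j', rfl, hj'⟩
  · have hx := hb (.x i) (by simp)
    have : 0 < Fintype.card (Idx m n k) := Fintype.card_pos_iff.2 ⟨.t ⟨0, hn⟩⟩
    obtain ⟨idx', hidx'⟩ := exists_last_of_pScore_lt Ext (.x i) (by simp only [maxps] at *; omega)
    rcases last_x hS hExt hidx' with ⟨a, rfl⟩ | rfl
    · exact ⟨a, hidx'⟩
    · exact absurd ((Ext _).injective (Fin.ext (hidx.trans hidx'.symm))) (by simp)
  · exact exists_last_one_of_first_vij hS hExt hb j'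
      (first_y_vij_of_last_wij hS hExt hb (by simp) hidx)
termination_by j.val

lemma exists_mem_last_one (hS : ∀ j, (S j).Nonempty) (hExt : ExtendsRed m n k hn S Ext)
    (hb : ∀ d, d ≠ .c → pScore Ext d ≤ maxps m n k d) (j : Fin n) :
    ∃ i ∈ S j, ∃ a, (Ext (.one a) (.x i)).val = Fintype.card (Cand m n) - 1 := by
  obtain ⟨d, hd⟩ := exists_val_eq_zero (Ext (.t j))
  obtain ⟨i, hiS, rfl⟩ := first_t hS hExt hd
  refine ⟨i, hiS, exists_last_one_of_first_vij hS hExt hb j ?_⟩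
  obtain ⟨d', hd'⟩ := exists_val_eq_zero (Ext (.wij i j))
  rcases first_wij hS hExt hd' with rfl | rfl
  · have hxx := hb (.xx i j) (by simp)
    have := one_lt_firstCnt Ext _ (by simp) hd hd'
    obtain ⟨idx, hidx⟩ := exists_last_of_pScore_lt Ext (.xx i j) (by simp only [maxps] at *; omega)
    exact absurd hidx (not_last_xx hS hExt)
  · exact first_y_vij_of_last_z hS hExt (last_vij_of_first_wij hS hExt hb hd')

theorem exists_hittingSet (hS : ∀ j, (S j).Nonempty) (hExt : ExtendsRed m n k hn S Ext)
    (hb : ∀ d, d ≠ .c → pScore Ext d ≤ maxps m n k d) :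
    ∃ X' : Finset (Fin m), X'.card ≤ k ∧ ∀ j, (X' ∩ S j).Nonempty := by
  have hone : ∀ a : Fin k, ∃ i, (Ext (.one a) (.x i)).val = Fintype.card (Cand m n) - 1 :=
    fun a => by
      obtain ⟨d, hd⟩ := exists_val_eq_card_sub_one (Ext (.one a))
      obtain ⟨i, rfl⟩ := last_one hS hExt hd
      exact ⟨i, hd⟩
  choose sel hsel using hone
  refine ⟨Finset.univ.image sel, Finset.card_image_le.trans (by simp), fun j => ?_⟩
  obtain ⟨i, hiS, a, ha⟩ := exists_mem_last_one hS hExt hb j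
  have : sel a = i := Cand.x.inj ((Ext _).injective (Fin.ext ((hsel a).trans ha.symm)))
  exact ⟨i, Finset.mem_inter.2 ⟨Finset.mem_image.2 ⟨a, Finset.mem_univ _, this⟩, hiS⟩⟩

end Backward

end HittingSetReduction

theorem reduction_correct_general
    (m n k : ℕ) (hn : 0 < n)
    (S : Fin n → Finset (Fin m)) (hS : ∀ j, (S j).Nonempty)
    (Vl : List (Ranking m n))
    (hcal : ∀ d : Cand m n, d ≠ Cand.c →
      lScore Vl d + maxps m n k d
        = lScore Vl Cand.c + Fintype.card (Idx m n k)) :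
    (∃ X' : Finset (Fin m), X'.card ≤ k ∧ ∀ j, (X' ∩ S j).Nonempty) ↔
    (∃ Ext : Idx m n k → Ranking m n,
      ExtendsRed m n k hn S Ext ∧
      ∀ d : Cand m n,
        lScore Vl d + pScore Ext d ≤ lScore Vl Cand.c + pScore Ext Cand.c) := by
  open HittingSetReduction in
  constructor
  · rintro ⟨X', hcard, hhit⟩
    obtain ⟨Ext, hExt, hle⟩ := exists_extension_le_maxps (hn := hn) hcard hhit
    refine ⟨Ext, hExt, fun d => ?_⟩
    rcases eq_or_ne d .c with rfl | hdc
    · exact le_rfl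
    · have := hcal d hdc; have := hle d hdc; have := pScore_c_eq_card hS hExt; omega
  · rintro ⟨Ext, hExt, hwin⟩
    refine exists_hittingSet hS hExt fun d hdc => ?_
    have := hcal d hdc; have := hwin d; have := pScore_c_eq_card hS hExt; omega

/-- Correctness of the reduction: given linear votes `V^ℓ` calibrating every
candidate `d ≠ c` to its maximum partial score with respect to `c` (whose score
in the partial votes is fixed, namely `|V^p|`), the Hitting Set instance has a
hitting set of size at most `k` iff `c` is a possible winner of the constructed
election under the scoring rule `(2,1,...,1,0)`. -/
theorem reduction_correct
    (m n k : ℕ) (hn : 0 < n) (hk : 0 < k)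
    (S : Fin n → Finset (Fin m)) (hS : ∀ j, (S j).Nonempty)
    (Vl : List (Ranking m n))
    (hcal : ∀ d : Cand m n, d ≠ Cand.c →
      lScore Vl d + maxps m n k d
        = lScore Vl Cand.c + Fintype.card (Idx m n k)) :
    (∃ X' : Finset (Fin m), X'.card ≤ k ∧ ∀ j, (X' ∩ S j).Nonempty) ↔
    (∃ Ext : Idx m n k → Ranking m n,
      ExtendsRed m n k hn S Ext ∧
      ∀ d : Cand m n,
        lScore Vl d + pScore Ext d ≤ lScore Vl Cand.c + pScore Ext Cand.c) :=
  reduction_correct_general m n k hn S hS Vl hcal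
end
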